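/- The desugaring translation preserves typing: (1) if Γ ⊢ M : A for a sugared term M then Γ ⊢ ⟦M⟧ : A; (2) if a sugared HTML element H produces messages of type A under Γ, then Γ ⊢ ⟦H⟧ : Html(A); (3) if a sugared attribute a produces messages of type A under Γ, then Γ ⊢ ⟦a⟧ : Attr(A). -/

import Mathlib

/-- Types of the simply-typed λMVU calculus. -/
inductive STy : Type
  | unit | str | int
  | fn (a b : STy)
  | prod (a b : STy)
  | sum (a b : STy)
  | html (a : STy)
  | attr (a : STy)

/-- Terms (de Bruijn representation).  `rec M` is the anonymous recursive
    function `rec f(x).M` with `x` at index 0 and `f` at index 1; `letpair`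
    binds two variables in its body; `case` branches bind one variable. -/
inductive Tm : Type
  | var (n : ℕ)
  | lam (m : Tm)
  | fix (m : Tm)
  | app (m n : Tm)
  | unit
  | strlit (s : String)
  | intlit (n : ℤ)
  | pair (m n : Tm)
  | letpair (m n : Tm)
  | inl (m : Tm)
  | inr (m : Tm)
  | case (l m n : Tm)
  | htmlTag (t : String) (attrs children : Tm)
  | htmlText (m : Tm)
  | htmlEmpty
  | attrC (k : String) (m : Tm)
  | attrEmpty
  | append (m n : Tm)

namespace Tm

def liftR (ρ : ℕ → ℕ) : ℕ → ℕ
  | 0 => 0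
  | n + 1 => ρ n + 1

def rename (ρ : ℕ → ℕ) : Tm → Tm
  | var n => var (ρ n)
  | lam m => lam (rename (liftR ρ) m)
  | fix m => fix (rename (liftR (liftR ρ)) m)
  | app m n => app (rename ρ m) (rename ρ n)
  | unit => unit
  | strlit s => strlit s
  | intlit n => intlit n
  | pair m n => pair (rename ρ m) (rename ρ n)
  | letpair m n => letpair (rename ρ m) (rename (liftR (liftR ρ)) n)
  | inl m => inl (rename ρ m)
  | inr m => inr (rename ρ m)
  | case l m n => case (rename ρ l) (rename (liftR ρ) m) (rename (liftR ρ) n)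
  | htmlTag t a c => htmlTag t (rename ρ a) (rename ρ c)
  | htmlText m => htmlText (rename ρ m)
  | htmlEmpty => htmlEmpty
  | attrC k m => attrC k (rename ρ m)
  | attrEmpty => attrEmpty
  | append m n => append (rename ρ m) (rename ρ n)

def liftS (σ : ℕ → Tm) : ℕ → Tm
  | 0 => var 0
  | n + 1 => rename Nat.succ (σ n)

def subst (σ : ℕ → Tm) : Tm → Tm
  | var n => σ n
  | lam m => lam (subst (liftS σ) m)
  | fix m => fix (subst (liftS (liftS σ)) m)
  | app m n => app (subst σ m) (subst σ n)
  | unit => unit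
  | strlit s => strlit s
  | intlit n => intlit n
  | pair m n => pair (subst σ m) (subst σ n)
  | letpair m n => letpair (subst σ m) (subst (liftS (liftS σ)) n)
  | inl m => inl (subst σ m)
  | inr m => inr (subst σ m)
  | case l m n => case (subst σ l) (subst (liftS σ) m) (subst (liftS σ) n)
  | htmlTag t a c => htmlTag t (subst σ a) (subst σ c)
  | htmlText m => htmlText (subst σ m)
  | htmlEmpty => htmlEmpty
  | attrC k m => attrC k (subst σ m)
  | attrEmpty => attrEmpty
  | append m n => append (subst σ m) (subst σ n)

/-- Substitute for the single bound variable (index 0). -/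
def subst1 (m v : Tm) : Tm :=
  subst (fun n => match n with | 0 => v | n + 1 => var n) m

/-- Substitute for the two bound variables (indices 0 and 1). -/
def subst2 (m v0 v1 : Tm) : Tm :=
  subst (fun n => match n with | 0 => v0 | 1 => v1 | n + 2 => var n) m

end Tm

/-- Values. -/
inductive Value : Tm → Prop
  | lam (m : Tm) : Value (Tm.lam m)
  | fix (m : Tm) : Value (Tm.fix m)
  | unit : Value Tm.unit
  | strlit (s : String) : Value (Tm.strlit s)
  | intlit (n : ℤ) : Value (Tm.intlit n)
  | pair {v w : Tm} : Value v → Value w → Value (Tm.pair v w)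
  | inl {v : Tm} : Value v → Value (Tm.inl v)
  | inr {v : Tm} : Value v → Value (Tm.inr v)
  | htmlTag {t : String} {a c : Tm} : Value a → Value c → Value (Tm.htmlTag t a c)
  | htmlText {v : Tm} : Value v → Value (Tm.htmlText v)
  | htmlEmpty : Value Tm.htmlEmpty
  | attrC {k : String} {v : Tm} : Value v → Value (Tm.attrC k v)
  | attrEmpty : Value Tm.attrEmpty
  | append {v w : Tm} : Value v → Value w → Value (Tm.append v w)

/-- Call-by-value, left-to-right evaluation contexts. -/
inductive EvalCtx : Type
  | hole
  | appL (E : EvalCtx) (m : Tm)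
  | appR (v : Tm) (hv : Value v) (E : EvalCtx)
  | pairL (E : EvalCtx) (m : Tm)
  | pairR (v : Tm) (hv : Value v) (E : EvalCtx)
  | letpair (E : EvalCtx) (m : Tm)
  | inl (E : EvalCtx)
  | inr (E : EvalCtx)
  | case (E : EvalCtx) (m n : Tm)
  | htmlTagL (t : String) (E : EvalCtx) (m : Tm)
  | htmlTagR (t : String) (v : Tm) (hv : Value v) (E : EvalCtx)
  | htmlText (E : EvalCtx)
  | attrC (k : String) (E : EvalCtx)
  | appendL (E : EvalCtx) (m : Tm)
  | appendR (v : Tm) (hv : Value v) (E : EvalCtx)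

def plug : EvalCtx → Tm → Tm
  | .hole, M => M
  | .appL E m, M => Tm.app (plug E M) m
  | .appR v _ E, M => Tm.app v (plug E M)
  | .pairL E m, M => Tm.pair (plug E M) m
  | .pairR v _ E, M => Tm.pair v (plug E M)
  | .letpair E m, M => Tm.letpair (plug E M) m
  | .inl E, M => Tm.inl (plug E M)
  | .inr E, M => Tm.inr (plug E M)
  | .case E m n, M => Tm.case (plug E M) m n
  | .htmlTagL t E m, M => Tm.htmlTag t (plug E M) m
  | .htmlTagR t v _ E, M => Tm.htmlTag t v (plug E M)
  | .htmlText E, M => Tm.htmlText (plug E M)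
  | .attrC k E, M => Tm.attrC k (plug E M)
  | .appendL E m, M => Tm.append (plug E M) m
  | .appendR v _ E, M => Tm.append v (plug E M)

/-- Call-by-value β-reduction `M ⟶M N`, closed under evaluation contexts. -/
inductive Step : Tm → Tm → Prop
  | beta {m v : Tm} : Value v → Step (Tm.app (Tm.lam m) v) (m.subst1 v)
  | recBeta {m v : Tm} :
      Value v → Step (Tm.app (Tm.fix m) v) (m.subst2 v (Tm.fix m))
  | letpair {v w n : Tm} :
      Value v → Value w → Step (Tm.letpair (Tm.pair v w) n) (n.subst2 w v)
  | caseInl {v m n : Tm} : Value v → Step (Tm.case (Tm.inl v) m n) (m.subst1 v)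
  | caseInr {v m n : Tm} : Value v → Step (Tm.case (Tm.inr v) m n) (n.subst1 v)
  | lift {E : EvalCtx} {m n : Tm} : Step m n → Step (plug E m) (plug E n)

/-- The typing judgement `Γ ⊢ M : A`, parameterised by the table `evt`
    assigning payload types to event-handler attribute keys (`evt k = none`
    means `k` is an ordinary attribute name). -/
inductive Typing (evt : String → Option STy) : List STy → Tm → STy → Prop
  | var {Γ : List STy} {n : ℕ} {A : STy} :
      Γ[n]? = some A → Typing evt Γ (Tm.var n) A
  | lam {Γ : List STy} {m : Tm} {A B : STy} :
      Typing evt (A :: Γ) m B → Typing evt Γ (Tm.lam m) (STy.fn A B)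
  | fix {Γ : List STy} {m : Tm} {A B : STy} :
      Typing evt (A :: STy.fn A B :: Γ) m B →
      Typing evt Γ (Tm.fix m) (STy.fn A B)
  | app {Γ : List STy} {m n : Tm} {A B : STy} :
      Typing evt Γ m (STy.fn A B) → Typing evt Γ n A →
      Typing evt Γ (Tm.app m n) B
  | unit {Γ : List STy} : Typing evt Γ Tm.unit STy.unit
  | strlit {Γ : List STy} {s : String} : Typing evt Γ (Tm.strlit s) STy.str
  | intlit {Γ : List STy} {n : ℤ} : Typing evt Γ (Tm.intlit n) STy.int
  | pair {Γ : List STy} {m n : Tm} {A B : STy} :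
      Typing evt Γ m A → Typing evt Γ n B →
      Typing evt Γ (Tm.pair m n) (STy.prod A B)
  | letpair {Γ : List STy} {m n : Tm} {A B C : STy} :
      Typing evt Γ m (STy.prod A B) → Typing evt (B :: A :: Γ) n C →
      Typing evt Γ (Tm.letpair m n) C
  | inl {Γ : List STy} {m : Tm} {A B : STy} :
      Typing evt Γ m A → Typing evt Γ (Tm.inl m) (STy.sum A B)
  | inr {Γ : List STy} {m : Tm} {A B : STy} :
      Typing evt Γ m B → Typing evt Γ (Tm.inr m) (STy.sum A B)
  | case {Γ : List STy} {l m n : Tm} {A B C : STy} :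
      Typing evt Γ l (STy.sum A B) → Typing evt (A :: Γ) m C →
      Typing evt (B :: Γ) n C → Typing evt Γ (Tm.case l m n) C
  | htmlTag {Γ : List STy} {t : String} {a c : Tm} {A : STy} :
      Typing evt Γ a (STy.attr A) → Typing evt Γ c (STy.html A) →
      Typing evt Γ (Tm.htmlTag t a c) (STy.html A)
  | htmlText {Γ : List STy} {m : Tm} {A : STy} :
      Typing evt Γ m STy.str → Typing evt Γ (Tm.htmlText m) (STy.html A)
  | htmlEmpty {Γ : List STy} {A : STy} : Typing evt Γ Tm.htmlEmpty (STy.html A)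
  | attrKV {Γ : List STy} {k : String} {m : Tm} {A : STy} :
      evt k = none → Typing evt Γ m STy.str →
      Typing evt Γ (Tm.attrC k m) (STy.attr A)
  | attrEvt {Γ : List STy} {h : String} {m : Tm} {P A : STy} :
      evt h = some P → Typing evt Γ m (STy.fn P A) →
      Typing evt Γ (Tm.attrC h m) (STy.attr A)
  | attrEmpty {Γ : List STy} {A : STy} : Typing evt Γ Tm.attrEmpty (STy.attr A)
  | htmlAppend {Γ : List STy} {m n : Tm} {A : STy} :
      Typing evt Γ m (STy.html A) → Typing evt Γ n (STy.html A) →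
      Typing evt Γ (Tm.append m n) (STy.html A)
  | attrAppend {Γ : List STy} {m n : Tm} {A : STy} :
      Typing evt Γ m (STy.attr A) → Typing evt Γ n (STy.attr A) →
      Typing evt Γ (Tm.append m n) (STy.attr A)

mutual
/-- Sugared terms: a fragment of λMVU terms extended with `html(H̄)` and
    `attr(ā)` blocks. -/
inductive STm : Type
  | var (n : ℕ)
  | lam (m : STm)
  | app (m n : STm)
  | unit
  | strlit (s : String)
  | pair (m n : STm)
  | htmlBlock (hs : SHtmls)
  | attrBlock (as_ : SAttrs)

/-- Sugared HTML: tags, string literals, and antiquoted terms `{M}`. -/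
inductive SHtml : Type
  | tag (t : String) (attrs : SAttrs) (children : SHtmls)
  | text (s : String)
  | anti (m : STm)

/-- Sequences of sugared HTML elements. -/
inductive SHtmls : Type
  | nil
  | cons (h : SHtml) (hs : SHtmls)

/-- Sugared attributes `ak = b` with body a string literal or antiquote. -/
inductive SAttr : Type
  | kvLit (k : String) (s : String)
  | kvAnti (k : String) (m : STm)

/-- Sequences of sugared attributes. -/
inductive SAttrs : Type
  | nil
  | cons (a : SAttr) (as_ : SAttrs)
end

mutual
/-- Desugaring of sugared terms. -/
def desugarTm : STm → Tm
  | .var n => Tm.var n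
  | .lam m => Tm.lam (desugarTm m)
  | .app m n => Tm.app (desugarTm m) (desugarTm n)
  | .unit => Tm.unit
  | .strlit s => Tm.strlit s
  | .pair m n => Tm.pair (desugarTm m) (desugarTm n)
  | .htmlBlock hs => desugarHtmls hs
  | .attrBlock as_ => desugarAttrs as_

/-- Desugaring of sugared HTML elements. -/
def desugarHtml : SHtml → Tm
  | .tag t attrs children => Tm.htmlTag t (desugarAttrs attrs) (desugarHtmls children)
  | .text s => Tm.htmlText (Tm.strlit s)
  | .anti m => desugarTm m

/-- Desugaring of HTML sequences: `⋆`-folds of the translations, with the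
    empty sequence translated to `htmlEmpty`. -/
def desugarHtmls : SHtmls → Tm
  | .nil => Tm.htmlEmpty
  | .cons h hs => Tm.append (desugarHtml h) (desugarHtmls hs)

/-- Desugaring of sugared attributes. -/
def desugarAttr : SAttr → Tm
  | .kvLit k s => Tm.attrC k (Tm.strlit s)
  | .kvAnti k m => Tm.attrC k (desugarTm m)

/-- Desugaring of attribute sequences: `⋆`-folds of the translations, with the
    empty sequence translated to `attrEmpty`. -/
def desugarAttrs : SAttrs → Tm
  | .nil => Tm.attrEmpty
  | .cons a as_ => Tm.append (desugarAttr a) (desugarAttrs as_)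
end

mutual
/-- Typing of sugared terms `Γ ⊢ M : A`. -/
inductive STyping (evt : String → Option STy) : List STy → STm → STy → Prop
  | var {Γ : List STy} {n : ℕ} {A : STy} :
      Γ[n]? = some A → STyping evt Γ (STm.var n) A
  | lam {Γ : List STy} {m : STm} {A B : STy} :
      STyping evt (A :: Γ) m B → STyping evt Γ (STm.lam m) (STy.fn A B)
  | app {Γ : List STy} {m n : STm} {A B : STy} :
      STyping evt Γ m (STy.fn A B) → STyping evt Γ n A →
      STyping evt Γ (STm.app m n) B
  | unit {Γ : List STy} : STyping evt Γ STm.unit STy.unit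
  | strlit {Γ : List STy} {s : String} : STyping evt Γ (STm.strlit s) STy.str
  | pair {Γ : List STy} {m n : STm} {A B : STy} :
      STyping evt Γ m A → STyping evt Γ n B →
      STyping evt Γ (STm.pair m n) (STy.prod A B)
  | htmlBlock {Γ : List STy} {hs : SHtmls} {A : STy} :
      HsProduce evt Γ hs A → STyping evt Γ (STm.htmlBlock hs) (STy.html A)
  | attrBlock {Γ : List STy} {as_ : SAttrs} {A : STy} :
      AsProduce evt Γ as_ A → STyping evt Γ (STm.attrBlock as_) (STy.attr A)

/-- `Γ ⊢ H ⇒ A`: the sugared HTML element `H` produces messages of type `A`. -/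
inductive HProduces (evt : String → Option STy) : List STy → SHtml → STy → Prop
  | tag {Γ : List STy} {t : String} {attrs : SAttrs} {children : SHtmls} {A : STy} :
      AsProduce evt Γ attrs A → HsProduce evt Γ children A →
      HProduces evt Γ (SHtml.tag t attrs children) A
  | text {Γ : List STy} {s : String} {A : STy} : HProduces evt Γ (SHtml.text s) A
  | anti {Γ : List STy} {m : STm} {A : STy} :
      STyping evt Γ m (STy.html A) → HProduces evt Γ (SHtml.anti m) A

/-- Every element of the HTML sequence produces messages of type `A`. -/
inductive HsProduce (evt : String → Option STy) : List STy → SHtmls → STy → Prop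
  | nil {Γ : List STy} {A : STy} : HsProduce evt Γ SHtmls.nil A
  | cons {Γ : List STy} {h : SHtml} {hs : SHtmls} {A : STy} :
      HProduces evt Γ h A → HsProduce evt Γ hs A →
      HsProduce evt Γ (SHtmls.cons h hs) A

/-- `Γ ⊢ a ⇒ A`: the sugared attribute `a` produces messages of type `A`.
    An event handler attribute `h = b` produces `A` if `b : evtTy(h) → A`;
    a key-value attribute produces any `A` if its body is a `String`. -/
inductive AProduces (evt : String → Option STy) : List STy → SAttr → STy → Prop
  | kvLit {Γ : List STy} {k s : String} {A : STy} :
      evt k = none → AProduces evt Γ (SAttr.kvLit k s) A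
  | kvAnti {Γ : List STy} {k : String} {m : STm} {A : STy} :
      evt k = none → STyping evt Γ m STy.str →
      AProduces evt Γ (SAttr.kvAnti k m) A
  | handler {Γ : List STy} {h : String} {m : STm} {P A : STy} :
      evt h = some P → STyping evt Γ m (STy.fn P A) →
      AProduces evt Γ (SAttr.kvAnti h m) A

/-- Every attribute in the sequence produces messages of type `A`. -/
inductive AsProduce (evt : String → Option STy) : List STy → SAttrs → STy → Prop
  | nil {Γ : List STy} {A : STy} : AsProduce evt Γ SAttrs.nil A
  | cons {Γ : List STy} {a : SAttr} {as_ : SAttrs} {A : STy} :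
      AProduces evt Γ a A → AsProduce evt Γ as_ A →
      AsProduce evt Γ (SAttrs.cons a as_) A
end

section

variable {evt : String → Option STy}

mutual
theorem STyping.typing_desugarTm {Γ : List STy} {M : STm} {A : STy} :
    STyping evt Γ M A → Typing evt Γ (desugarTm M) A
  | .var h => .var h
  | .lam h => .lam h.typing_desugarTm
  | .app hm hn => .app hm.typing_desugarTm hn.typing_desugarTm
  | .unit => .unit
  | .strlit => .strlit
  | .pair hm hn => .pair hm.typing_desugarTm hn.typing_desugarTm
  | .htmlBlock hs => hs.typing_desugarHtmls
  | .attrBlock as_ => as_.typing_desugarAttrs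

theorem HProduces.typing_desugarHtml {Γ : List STy} {H : SHtml} {A : STy} :
    HProduces evt Γ H A → Typing evt Γ (desugarHtml H) (STy.html A)
  | .tag ha hc => .htmlTag ha.typing_desugarAttrs hc.typing_desugarHtmls
  | .text => .htmlText .strlit
  | .anti hm => hm.typing_desugarTm

theorem HsProduce.typing_desugarHtmls {Γ : List STy} {hs : SHtmls} {A : STy} :
    HsProduce evt Γ hs A → Typing evt Γ (desugarHtmls hs) (STy.html A)
  | .nil => .htmlEmpty
  | .cons h hs => .htmlAppend h.typing_desugarHtml hs.typing_desugarHtmls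

theorem AProduces.typing_desugarAttr {Γ : List STy} {a : SAttr} {A : STy} :
    AProduces evt Γ a A → Typing evt Γ (desugarAttr a) (STy.attr A)
  | .kvLit hk => .attrKV hk .strlit
  | .kvAnti hk hm => .attrKV hk hm.typing_desugarTm
  | .handler hh hm => .attrEvt hh hm.typing_desugarTm

theorem AsProduce.typing_desugarAttrs {Γ : List STy} {as_ : SAttrs} {A : STy} :
    AsProduce evt Γ as_ A → Typing evt Γ (desugarAttrs as_) (STy.attr A)
  | .nil => .attrEmpty
  | .cons a as_ => .attrAppend a.typing_desugarAttr as_.typing_desugarAttrs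
end

end

/-- The desugaring translation preserves typing: (1) if `Γ ⊢ M : A` for a
    sugared term `M` then `Γ ⊢ ⟦M⟧ : A`; (2) if a sugared HTML element `H`
    produces messages of type `A` under `Γ`, then `Γ ⊢ ⟦H⟧ : Html(A)`;
    (3) if a sugared attribute `a` produces messages of type `A` under `Γ`,
    then `Γ ⊢ ⟦a⟧ : Attr(A)`. -/
theorem desugaring_preserves_typing (evt : String → Option STy) :
    (∀ (Γ : List STy) (M : STm) (A : STy),
      STyping evt Γ M A → Typing evt Γ (desugarTm M) A) ∧
    (∀ (Γ : List STy) (H : SHtml) (A : STy),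
      HProduces evt Γ H A → Typing evt Γ (desugarHtml H) (STy.html A)) ∧
    (∀ (Γ : List STy) (a : SAttr) (A : STy),
      AProduces evt Γ a A → Typing evt Γ (desugarAttr a) (STy.attr A)) :=
  ⟨fun _ _ _ => STyping.typing_desugarTm, fun _ _ _ => HProduces.typing_desugarHtml,
    fun _ _ _ => AProduces.typing_desugarAttr⟩
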